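/- Let $B_R\subset\mathbb{R}^N$ be a ball with first Dirichlet eigenvalue $\lambda_1(R)<1$, with positive first eigenfunction $\varphi_1$. Suppose $h\in C^2(\overline{B_R})$ satisfies $-\Delta h=h^p$ and $0<h\leq 1$ in $\overline{B_R}$, where $0<p<1$. Then one obtains a contradiction: $\int_{\partial B_R}h\,\partial_n\varphi_1\,dS=\int_{B_R}(h^{p-1}-\lambda_1(R))h\varphi_1\,dy$, where the left side is negative (since $h>0$ and $\partial_n\varphi_1<0$ on $\partial B_R$) while the right side is positive (since $h^{p-1}\geq 1>\lambda_1(R)$). Hence no such $h$ exists. -/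

import Mathlib

/-!
Maximum principle argument. Let `M = φ₁ x₀ / h x₀` be the maximum of `φ₁ / h` over the closed
ball. It is positive, so `x₀` is not on the sphere where `φ₁` vanishes, and `M h - φ₁ ≥ 0`
touches zero at the interior point `x₀`. Hence `Δφ₁ x₀ ≤ M Δh x₀`, i.e.
`h x₀ ^ p ≤ λ₁ h x₀ < h x₀`, which contradicts `h x₀ ≤ h x₀ ^ p` for `0 < h x₀ ≤ 1`.
-/

open Real

/-- The Laplacian of `u : ℝ^N → ℝ`, as the sum of second partial derivatives. -/
noncomputable def lap {N : ℕ} (u : EuclideanSpace ℝ (Fin N) → ℝ)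
    (x : EuclideanSpace ℝ (Fin N)) : ℝ :=
  ∑ i : Fin N, fderiv ℝ (fun y => fderiv ℝ u y (EuclideanSpace.single i 1)) x
    (EuclideanSpace.single i 1)

open Filter Metric Topology

theorem IsLocalMin.deriv_deriv_nonneg {f : ℝ → ℝ} {a : ℝ} (hmin : IsLocalMin f a)
    (hc : ContinuousAt f a) : 0 ≤ deriv (deriv f) a := by
  by_contra! hneg
  -- A point that is both a local min and a local max has `f` locally constant.
  have hmax := isLocalMax_of_deriv_deriv_neg hneg hmin.deriv_eq_zero hc
  have hconst : f =ᶠ[𝓝 a] fun _ => f a := by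
    filter_upwards [hmin, hmax] with x h₁ h₂ using le_antisymm h₂ h₁
  have hderiv : deriv f =ᶠ[𝓝 a] fun _ => 0 := by
    simpa using hconst.deriv
  simp [hderiv.deriv_eq] at hneg

section Directional

variable {E : Type*} [NormedAddCommGroup E] [NormedSpace ℝ E] {u v : E → ℝ} {x : E}

theorem ContDiffAt.differentiableAt_fderiv_apply (hu : ContDiffAt ℝ 2 u x) (e : E) :
    DifferentiableAt ℝ (fun y => fderiv ℝ u y e) x :=
  ((hu.fderiv_right (by norm_num)).differentiableAt one_ne_zero).clm_apply
    (differentiableAt_const e)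

theorem IsLocalMin.fderiv_fderiv_apply_self_nonneg (hmin : IsLocalMin u x)
    (hu : ContDiffAt ℝ 2 u x) (e : E) : 0 ≤ fderiv ℝ (fun y => fderiv ℝ u y e) x e := by
  set ℓ : ℝ → E := fun s => x + s • e
  have hℓ (s : ℝ) : HasDerivAt ℓ e s := by
    have := ((hasDerivAt_id s).smul_const e).const_add x
    rwa [one_smul] at this
  have hℓ0 : ℓ 0 = x := by simp [ℓ]
  have hℓx : Tendsto ℓ (𝓝 0) (𝓝 x) := hℓ0 ▸ (hℓ 0).continuousAt.tendsto
  have hderiv : deriv (u ∘ ℓ) =ᶠ[𝓝 0] (fun y => fderiv ℝ u y e) ∘ ℓ := by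
    filter_upwards [hℓx.eventually (hu.eventually (by simp))] with s hs
    exact ((hs.differentiableAt two_ne_zero).hasFDerivAt.comp_hasDerivAt s (hℓ s)).deriv
  have hsecond : HasDerivAt ((fun y => fderiv ℝ u y e) ∘ ℓ)
      (fderiv ℝ (fun y => fderiv ℝ u y e) x e) 0 :=
    (hu.differentiableAt_fderiv_apply e).hasFDerivAt.comp_hasDerivAt_of_eq 0 (hℓ 0) hℓ0.symm
  have hmin' : IsLocalMin (u ∘ ℓ) 0 := (hℓ0 ▸ hmin).comp_continuous (hℓ 0).continuousAt
  have := hmin'.deriv_deriv_nonneg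
    ((hℓ0 ▸ hu.continuousAt).comp (hℓ 0).continuousAt)
  rwa [hderiv.deriv_eq, hsecond.deriv] at this

theorem fderiv_fderiv_apply_sub (hu : ContDiffAt ℝ 2 u x) (hv : ContDiffAt ℝ 2 v x)
    (e e' : E) :
    fderiv ℝ (fun y => fderiv ℝ (fun z => u z - v z) y e) x e' =
      fderiv ℝ (fun y => fderiv ℝ u y e) x e' - fderiv ℝ (fun y => fderiv ℝ v y e) x e' := by
  have hfirst : (fun y => fderiv ℝ (fun z => u z - v z) y e) =ᶠ[𝓝 x]
      fun y => fderiv ℝ u y e - fderiv ℝ v y e := by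
    filter_upwards [hu.eventually (by simp), hv.eventually (by simp)] with y hu' hv'
    rw [fderiv_fun_sub (hu'.differentiableAt two_ne_zero) (hv'.differentiableAt two_ne_zero)]
    rfl
  rw [hfirst.fderiv_eq, fderiv_fun_sub (hu.differentiableAt_fderiv_apply e)
    (hv.differentiableAt_fderiv_apply e)]
  rfl

theorem fderiv_fderiv_apply_const_mul (hu : ContDiffAt ℝ 2 u x) (a : ℝ) (e e' : E) :
    fderiv ℝ (fun y => fderiv ℝ (fun z => a * u z) y e) x e' =
      a * fderiv ℝ (fun y => fderiv ℝ u y e) x e' := by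
  have hfirst : (fun y => fderiv ℝ (fun z => a * u z) y e) =ᶠ[𝓝 x]
      fun y => a * fderiv ℝ u y e := by
    filter_upwards [hu.eventually (by simp)] with y hu'
    rw [fderiv_const_mul (hu'.differentiableAt two_ne_zero)]
    rfl
  rw [hfirst.fderiv_eq, fderiv_const_mul (hu.differentiableAt_fderiv_apply e)]
  rfl

end Directional

section Laplacian

variable {N : ℕ} {u v : EuclideanSpace ℝ (Fin N) → ℝ} {x : EuclideanSpace ℝ (Fin N)}

theorem lap_sub (hu : ContDiffAt ℝ 2 u x) (hv : ContDiffAt ℝ 2 v x) :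
    lap (fun z => u z - v z) x = lap u x - lap v x := by
  simp only [lap, fderiv_fderiv_apply_sub hu hv, Finset.sum_sub_distrib]

theorem lap_const_mul (hu : ContDiffAt ℝ 2 u x) (a : ℝ) :
    lap (fun z => a * u z) x = a * lap u x := by
  simp only [lap, fderiv_fderiv_apply_const_mul hu, Finset.mul_sum]

theorem IsLocalMin.lap_nonneg (hmin : IsLocalMin u x) (hu : ContDiffAt ℝ 2 u x) :
    0 ≤ lap u x :=
  Finset.sum_nonneg fun _ _ => hmin.fderiv_fderiv_apply_self_nonneg hu _

theorem lap_le_lap_of_eventuallyLE_of_eq (hu : ContDiffAt ℝ 2 u x) (hv : ContDiffAt ℝ 2 v x)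
    (hle : u ≤ᶠ[𝓝 x] v) (heq : u x = v x) : lap u x ≤ lap v x := by
  have hmin : IsLocalMin (fun z => v z - u z) x := by
    filter_upwards [hle] with z hz
    linarith
  simpa [lap_sub hv hu] using hmin.lap_nonneg (hv.sub hu)

end Laplacian

theorem IsCompact.exists_forall_le_ratio_mul {X : Type*} [TopologicalSpace X] {K : Set X}
    (hK : IsCompact K) (hne : K.Nonempty) {f g : X → ℝ} (hf : ContinuousOn f K)
    (hg : ContinuousOn g K) (hgpos : ∀ x ∈ K, 0 < g x) :
    ∃ x₀ ∈ K, ∀ x ∈ K, f x ≤ f x₀ / g x₀ * g x := by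
  obtain ⟨x₀, hx₀, hmax⟩ := hK.exists_isMaxOn hne (hf.div hg fun x hx => (hgpos x hx).ne')
  exact ⟨x₀, hx₀, fun x hx => (div_le_iff₀ (hgpos x hx)).mp (hmax hx)⟩

theorem stmt12_general (N : ℕ) (p R lam₁ : ℝ) (hp1 : p < 1) (hR : 0 < R)
    (y₀ : EuclideanSpace ℝ (Fin N))
    (φ₁ : EuclideanSpace ℝ (Fin N) → ℝ)
    (hφreg : ContDiffOn ℝ 2 φ₁ (Metric.closedBall y₀ R))
    (hφpos : ∀ x ∈ Metric.ball y₀ R, 0 < φ₁ x)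
    (hφbc : ∀ x ∈ Metric.sphere y₀ R, φ₁ x = 0)
    (hφeig : ∀ x ∈ Metric.ball y₀ R, -(lap φ₁ x) = lam₁ * φ₁ x)
    (hlam : lam₁ < 1)
    (h : EuclideanSpace ℝ (Fin N) → ℝ)
    (hhreg : ContDiffOn ℝ 2 h (Metric.closedBall y₀ R))
    (hhpos : ∀ x ∈ Metric.closedBall y₀ R, 0 < h x)
    (hhle : ∀ x ∈ Metric.closedBall y₀ R, h x ≤ 1)
    (hheq : ∀ x ∈ Metric.closedBall y₀ R, -(lap h x) = (h x) ^ p) :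
    False := by
  obtain ⟨x₀, hx₀K, hle⟩ := (isCompact_closedBall y₀ R).exists_forall_le_ratio_mul
    ⟨y₀, mem_closedBall_self hR.le⟩ hφreg.continuousOn hhreg.continuousOn hhpos
  set M := φ₁ x₀ / h x₀
  have hM : 0 < M := pos_of_mul_pos_left ((hφpos y₀ (mem_ball_self hR)).trans_le
    (hle y₀ (mem_closedBall_self hR.le))) (hhpos y₀ (mem_closedBall_self hR.le)).le
  have hx₀ : x₀ ∈ ball y₀ R := by
    refine (mem_closedBall.mp hx₀K).lt_of_ne fun hsphere => hM.ne' ?_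
    simp [M, hφbc x₀ (mem_sphere.mpr hsphere)]
  have hnhds : closedBall y₀ R ∈ 𝓝 x₀ :=
    mem_of_superset (isOpen_ball.mem_nhds hx₀) ball_subset_closedBall
  have hhx₀ := hhpos x₀ hx₀K
  have htouch : φ₁ x₀ = M * h x₀ := (div_mul_cancel₀ _ hhx₀.ne').symm
  have hlap : lap φ₁ x₀ ≤ M * lap h x₀ := by
    rw [← lap_const_mul (hhreg.contDiffAt hnhds)]
    exact lap_le_lap_of_eventuallyLE_of_eq (hφreg.contDiffAt hnhds)
      ((hhreg.contDiffAt hnhds).const_smul M) (eventually_of_mem hnhds hle) htouch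
  have hpow : h x₀ ^ p ≤ lam₁ * h x₀ := by
    have hφ := hφeig x₀ hx₀
    rw [htouch] at hφ
    refine le_of_mul_le_mul_left ?_ hM
    linear_combination hlap + hφ - M * hheq x₀ hx₀K
  have hge : h x₀ ≤ h x₀ ^ p := by
    simpa using rpow_le_rpow_of_exponent_ge hhx₀ (hhle x₀ hx₀K) hp1.le
  linarith [mul_lt_of_lt_one_left hhx₀ hlam]

/-- No solution `0 < h ≤ 1` of `-Δh = h^p` (`0 < p < 1`) can exist on a closed ball whose
first Dirichlet eigenvalue `lam₁ < 1`, where `φ₁ > 0` is the first eigenfunction with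
negative outward normal derivative on the boundary sphere. -/
theorem stmt12 (N : ℕ) (p R lam₁ : ℝ) (hp0 : 0 < p) (hp1 : p < 1) (hR : 0 < R)
    (y₀ : EuclideanSpace ℝ (Fin N))
    (φ₁ : EuclideanSpace ℝ (Fin N) → ℝ)
    (hφreg : ContDiffOn ℝ 2 φ₁ (Metric.closedBall y₀ R))
    (hφpos : ∀ x ∈ Metric.ball y₀ R, 0 < φ₁ x)
    (hφbc : ∀ x ∈ Metric.sphere y₀ R, φ₁ x = 0)
    (hφeig : ∀ x ∈ Metric.ball y₀ R, -(lap φ₁ x) = lam₁ * φ₁ x)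
    (hlam : lam₁ < 1)
    (hφn : ∀ x ∈ Metric.sphere y₀ R, fderiv ℝ φ₁ x (x - y₀) < 0)
    (h : EuclideanSpace ℝ (Fin N) → ℝ)
    (hhreg : ContDiffOn ℝ 2 h (Metric.closedBall y₀ R))
    (hhpos : ∀ x ∈ Metric.closedBall y₀ R, 0 < h x)
    (hhle : ∀ x ∈ Metric.closedBall y₀ R, h x ≤ 1)
    (hheq : ∀ x ∈ Metric.closedBall y₀ R, -(lap h x) = (h x) ^ p) :
    False :=
  stmt12_general N p R lam₁ hp1 hR y₀ φ₁ hφreg hφpos hφbc hφeig hlam h hhreg hhpos hhle hheq
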